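/- Let G be a finite non-abelian nilpotent group. Then the power graph P(G) is not a line graph: there is no graph Γ such that P(G) is isomorphic to the line graph of Γ. -/

import Mathlib

/-- The power graph of a group `G`: distinct `x, y` are adjacent iff one is a positive
integer power of the other. -/
def powerGraph (G : Type) [Group G] : SimpleGraph G where
  Adj x y := x ≠ y ∧ ((∃ n : ℕ, 0 < n ∧ y ^ n = x) ∨ (∃ n : ℕ, 0 < n ∧ x ^ n = y))
  symm := by
    refine ⟨?_⟩
    rintro x y ⟨hxy, h⟩
    exact ⟨hxy.symm, h.symm⟩
  loopless := by
    refine ⟨?_⟩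
    rintro x ⟨h, -⟩
    exact h rfl

/-- A vertex is dominating if it is adjacent to every other vertex. -/
def SimpleGraph.IsDominatingVertex {V : Type} (H : SimpleGraph V) (v : V) : Prop :=
  ∀ u, u ≠ v → H.Adj v u

/-- The proper power graph: the induced subgraph of the power graph on the
set of non-dominating vertices. -/
def properPowerGraph (G : Type) [Group G] :=
  (powerGraph G).induce {x : G | ¬ (powerGraph G).IsDominatingVertex x}

/-- A graph is a line graph if it is isomorphic to the line graph of some graph. -/
def IsLineGraph {V : Type} (H : SimpleGraph V) : Prop :=
  ∃ (W : Type) (Γ : SimpleGraph W), Nonempty (H ≃g Γ.lineGraph)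


/-
The power graph of a non-abelian group contains an induced claw `K₁,₃`: adjacent elements of a
power graph commute, so if `a` and `b` do not commute then `a`, `b`, `ab` are pairwise
non-adjacent, while the identity is adjacent to every other element of a finite group. A line
graph has no induced claw: an edge `e` has only two endpoints, so two of three edges meeting `e`
meet it at the same endpoint and are adjacent.
-/

open SimpleGraph

theorem Sym2.eq_or_eq_or_eq_of_mem {α : Type*} {z : Sym2 α} {x y w : α}
    (hx : x ∈ z) (hy : y ∈ z) (hw : w ∈ z) : x = y ∨ x = w ∨ y = w := by
  induction z using Sym2.ind
  simp only [Sym2.mem_iff] at hx hy hw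
  grind

namespace SimpleGraph

variable {V : Type*} {H : SimpleGraph V}

abbrev claw : SimpleGraph (Fin 4) := starGraph 0

theorem claw_isIndContained_iff :
    claw ⊴ H ↔ ∃ v x y z, H.Adj v x ∧ H.Adj v y ∧ H.Adj v z ∧ x ≠ y ∧ x ≠ z ∧ y ≠ z ∧
      ¬H.Adj x y ∧ ¬H.Adj x z ∧ ¬H.Adj y z := by
  constructor
  · rintro ⟨f⟩
    have adj (i j : Fin 4) : H.Adj (f i) (f j) ↔ i ≠ j ∧ (i = 0 ∨ j = 0) := by
      rw [f.map_rel_iff, starGraph_adj]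
    refine ⟨f 0, f 1, f 2, f 3, ?_⟩
    simp only [adj, ne_eq, f.injective.eq_iff]
    decide
  · rintro ⟨v, x, y, z, hx, hy, hz, hxy, hxz, hyz, nxy, nxz, nyz⟩
    refine ⟨⟨⟨![v, x, y, z], ?_⟩, ?_⟩⟩
    · intro i j hij
      fin_cases i <;> fin_cases j <;>
        simp_all [hx.ne, hy.ne, hz.ne, hx.ne.symm, hy.ne.symm, hz.ne.symm, eq_comm]
    · intro i j
      change H.Adj (![v, x, y, z] i) (![v, x, y, z] j) ↔ _
      fin_cases i <;> fin_cases j <;> simp [starGraph_adj, H.adj_comm, *]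

theorem not_claw_isIndContained_lineGraph {Γ : SimpleGraph V} : ¬claw ⊴ Γ.lineGraph := by
  rw [claw_isIndContained_iff]
  rintro ⟨e, e₁, e₂, e₃, h₁, h₂, h₃, h₁₂, h₁₃, h₂₃, n₁₂, n₁₃, n₂₃⟩
  simp only [lineGraph_adj_iff_exists] at h₁ h₂ h₃ n₁₂ n₁₃ n₂₃
  obtain ⟨-, w₁, hw₁, hw₁'⟩ := h₁
  obtain ⟨-, w₂, hw₂, hw₂'⟩ := h₂
  obtain ⟨-, w₃, hw₃, hw₃'⟩ := h₃
  rcases Sym2.eq_or_eq_or_eq_of_mem hw₁ hw₂ hw₃ with rfl | rfl | rfl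
  · exact n₁₂ ⟨h₁₂, w₁, hw₁', hw₂'⟩
  · exact n₁₃ ⟨h₁₃, w₁, hw₁', hw₃'⟩
  · exact n₂₃ ⟨h₂₃, w₂, hw₂', hw₃'⟩

end SimpleGraph

section PowerGraph

variable {G : Type} [Group G]

theorem SimpleGraph.Adj.commute {x y : G} (h : (powerGraph G).Adj x y) : Commute x y := by
  obtain ⟨-, ⟨n, -, rfl⟩ | ⟨n, -, rfl⟩⟩ := h
  · exact Commute.pow_self y n
  · exact Commute.self_pow x n

theorem powerGraph_one_adj [Finite G] {x : G} (hx : x ≠ 1) : (powerGraph G).Adj 1 x :=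
  ⟨hx.symm, Or.inl ⟨orderOf x, orderOf_pos x, pow_orderOf_eq_one x⟩⟩

theorem claw_isIndContained_powerGraph [Finite G] {a b : G} (hab : ¬Commute a b) :
    claw ⊴ powerGraph G := by
  have ha_ab : ¬Commute a (a * b) := fun h =>
    hab ((IsLeftRegular.all a).commute_mul_left_iff.1 h.symm)
  have hb_ab : ¬Commute b (a * b) := fun h =>
    hab ((IsRightRegular.all b).commute_mul_right_iff.1 h.symm).symm
  have ne_one {x y : G} (h : ¬Commute x y) : x ≠ 1 := by
    rintro rfl
    exact h (Commute.one_left y)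
  have ne {x y : G} (h : ¬Commute x y) : x ≠ y := by
    rintro rfl
    exact h (Commute.refl x)
  rw [claw_isIndContained_iff]
  exact ⟨1, a, b, a * b, powerGraph_one_adj (ne_one hab),
    powerGraph_one_adj (ne_one fun h => hab h.symm),
    powerGraph_one_adj (ne_one fun h => ha_ab h.symm), ne hab, ne ha_ab, ne hb_ab,
    fun h => hab h.commute, fun h => ha_ab h.commute, fun h => hb_ab h.commute⟩

end PowerGraph

theorem powerGraph_not_isLineGraph_of_nonabelian_nilpotent_general (G : Type) [Group G] [Finite G]
    (hna : ∃ a b : G, a * b ≠ b * a) :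
    ¬ IsLineGraph (powerGraph G) := by
  rintro ⟨W, Γ, ⟨f⟩⟩
  obtain ⟨a, b, hab⟩ := hna
  exact not_claw_isIndContained_lineGraph
    ((claw_isIndContained_powerGraph hab).trans f.isIndContained)

theorem powerGraph_not_isLineGraph_of_nonabelian_nilpotent (G : Type) [Group G] [Finite G]
    (hnil : Group.IsNilpotent G) (hna : ∃ a b : G, a * b ≠ b * a) :
    ¬ IsLineGraph (powerGraph G) :=
  powerGraph_not_isLineGraph_of_nonabelian_nilpotent_general G hna
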